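/- arXiv:1810.02040 — 4 statements merged into one kernel-verified Lean document; each statement's English description precedes it below -/
import Mathlib

section
/- For all positive integers n, the number I_n of unlabeled interval graphs on n vertices is at most (2n-1)!! = ∏_{j=1}^{n} (2j-1). -/
def IsIntervalGraph {n : ℕ} (G : SimpleGraph (Fin n)) : Prop :=
  ∃ a b : Fin n → ℝ, (∀ i, a i ≤ b i) ∧
    ∀ i j, i ≠ j → (G.Adj i j ↔ (Set.Icc (a i) (b i) ∩ Set.Icc (a j) (b j)).Nonempty)

def intervalIsoSetoid (n : ℕ) : Setoid {G : SimpleGraph (Fin n) // IsIntervalGraph G} where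
  r G H := Nonempty (G.1 ≃g H.1)
  iseqv := ⟨fun G => ⟨SimpleGraph.Iso.refl⟩,
    fun ⟨e⟩ => ⟨e.symm⟩, fun ⟨e⟩ ⟨f⟩ => ⟨e.trans f⟩⟩

/-- The number of unlabeled interval graphs on `n` vertices. -/
noncomputable def intervalGraphCount (n : ℕ) : ℕ :=
  Nat.card (Quotient (intervalIsoSetoid n))

/-!
Order the intervals by left endpoint. Then a vertex is adjacent to a later one iff the later
interval starts before the earlier one ends, so the later neighbours of the `k`-th vertex are
exactly the next `d k` vertices for some `d k < n - k`. An interval graph is therefore determined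
up to isomorphism by such a sequence `d`, and there are `n! ≤ (2n-1)!!` of them.
-/

open Finset Nat

namespace Fin

variable {n : ℕ}

theorem card_filter_Ioi_lt_sub (k : Fin n) (P : Fin n → Prop) [DecidablePred P] :
    #{i ∈ Ioi k | P i} < n - k :=
  calc #{i ∈ Ioi k | P i} ≤ #(Ioi k) := card_filter_le _ _
    _ < n - k := by rw [card_Ioi]; omega

theorem le_add_card_filter_Ioi_iff {P : Fin n → Prop} [DecidablePred P]
    (hP : ∀ ⦃i j⦄, i ≤ j → P j → P i) {k j : Fin n} (hkj : k < j) :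
    (j : ℕ) ≤ k + #{i ∈ Ioi k | P i} ↔ P j := by
  constructor
  · intro hle
    by_contra hj
    have hsub : {i ∈ Ioi k | P i} ⊆ Ioo k j := fun i hi => by
      rw [mem_filter, mem_Ioi] at hi
      exact mem_Ioo.2 ⟨hi.1, lt_of_not_ge fun hji => hj (hP hji hi.2)⟩
    have := card_le_card hsub
    rw [card_Ioo] at this
    omega
  · intro hj
    have hsub : Ioc k j ⊆ {i ∈ Ioi k | P i} := fun i hi => by
      rw [mem_Ioc] at hi
      exact mem_filter.2 ⟨mem_Ioi.2 hi.1, hP hi.2 hj⟩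
    have := card_le_card hsub
    rw [card_Ioc] at this
    omega

end Fin

namespace SimpleGraph

variable {n : ℕ}

def reachGraph (d : Fin n → ℕ) : SimpleGraph (Fin n) :=
  fromRel fun i j => i < j ∧ (j : ℕ) ≤ i + d i

theorem reachGraph_adj_of_lt {d : Fin n → ℕ} {i j : Fin n} (hij : i < j) :
    (reachGraph d).Adj i j ↔ (j : ℕ) ≤ i + d i := by
  simp only [reachGraph, fromRel_adj, hij.ne, ne_eq, not_false_eq_true, hij, true_and,
    hij.not_gt, false_and, or_false]

theorem ext_of_adj_of_lt {V : Type*} [LinearOrder V] {G H : SimpleGraph V}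
    (h : ∀ ⦃i j⦄, i < j → (G.Adj i j ↔ H.Adj i j)) : G = H := by
  ext i j
  rcases lt_trichotomy i j with hij | rfl | hji
  · exact h hij
  · simp
  · rw [G.adj_comm, H.adj_comm]; exact h hji

theorem eq_reachGraph_of_monotone {α : Type*} [Preorder α] {G : SimpleGraph (Fin n)}
    {a b : Fin n → α} (ha : Monotone a)
    (hG : ∀ ⦃i j⦄, i < j → (G.Adj i j ↔ a j ≤ b i)) :
    ∃ d : (i : Fin n) → Fin (n - i), G = reachGraph fun i => d i := by
  classical
  refine ⟨fun k => ⟨#{i ∈ Ioi k | a i ≤ b k}, Fin.card_filter_Ioi_lt_sub _ _⟩,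
    ext_of_adj_of_lt fun k j hkj => ?_⟩
  rw [hG hkj, reachGraph_adj_of_lt hkj,
    Fin.le_add_card_filter_Ioi_iff (fun i i' hii' h => (ha hii').trans h) hkj]

end SimpleGraph

open SimpleGraph

section

variable {n : ℕ}

theorem IsIntervalGraph.exists_comap_adj_iff {G : SimpleGraph (Fin n)} (hG : IsIntervalGraph G) :
    ∃ σ : Fin n ≃ Fin n, ∃ a b : Fin n → ℝ, Monotone a ∧
      ∀ ⦃i j⦄, i < j → ((G.comap σ).Adj i j ↔ a j ≤ b i) := by
  obtain ⟨a, b, hab, hadj⟩ := hG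
  refine ⟨Tuple.sort a, a ∘ Tuple.sort a, b ∘ Tuple.sort a, Tuple.monotone_sort a,
    fun i j hij => ?_⟩
  have hσ : Tuple.sort a i ≠ Tuple.sort a j := (Tuple.sort a).injective.ne hij.ne
  rw [comap_adj, hadj _ _ hσ, Set.Icc_inter_Icc, Set.nonempty_Icc, sup_le_iff, le_inf_iff,
    le_inf_iff]
  exact ⟨fun h => h.2.1,
    fun h => ⟨⟨hab _, (Tuple.monotone_sort a hij.le).trans (hab _)⟩, h, hab _⟩⟩

theorem IsIntervalGraph.exists_iso_reachGraph {G : SimpleGraph (Fin n)} (hG : IsIntervalGraph G) :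
    ∃ d : (i : Fin n) → Fin (n - i), Nonempty (reachGraph (fun i => d i) ≃g G) := by
  obtain ⟨σ, a, b, ha, hadj⟩ := hG.exists_comap_adj_iff
  obtain ⟨d, hd⟩ := eq_reachGraph_of_monotone ha hadj
  exact ⟨d, ⟨hd ▸ Iso.comap σ G⟩⟩

theorem card_pi_fin_sub : Nat.card ((i : Fin n) → Fin (n - i)) = n ! := by
  simp only [Nat.card_eq_fintype_card, Fintype.card_pi, Fintype.card_fin]
  rw [Fin.prod_univ_eq_prod_range (n - ·), ← descFactorial_eq_prod_range, descFactorial_self]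

theorem factorial_le_prod_Icc_two_mul_sub_one : n ! ≤ ∏ j ∈ Icc 1 n, (2 * j - 1) := by
  rw [← Ico_add_one_right_eq_Icc, ← prod_Ico_id_eq_factorial]
  exact prod_le_prod' fun j _ => by omega

theorem intervalGraphCount_le_factorial : intervalGraphCount n ≤ n ! := by
  choose code hcode using fun q : Quotient (intervalIsoSetoid n) => q.out.2.exists_iso_reachGraph
  have hinj : Function.Injective code := fun q₁ q₂ h =>
    Quotient.out_equiv_out.1 ⟨(hcode q₁).some.symm.trans (h ▸ (hcode q₂).some)⟩
  exact card_pi_fin_sub (n := n) ▸ Nat.card_le_card_of_injective code hinj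

end

theorem interval_graph_count_le_double_factorial_general (n : ℕ) :
    intervalGraphCount n ≤ ∏ j ∈ Finset.Icc 1 n, (2 * j - 1) :=
  intervalGraphCount_le_factorial.trans factorial_le_prod_Icc_two_mul_sub_one

theorem interval_graph_count_le_double_factorial (n : ℕ) (hn : 0 < n) :
    intervalGraphCount n ≤ ∏ j ∈ Finset.Icc 1 n, (2 * j - 1) :=
  interval_graph_count_le_double_factorial_general n
end

section
/- For every positive integer k, I_{3k} ≥ k!/3^{3k}, where I_n is the number of unlabeled interval graphs on n vertices. -/
/-!
For a permutation `π` of `Fin k` take the `3k` intervals `[i, i]`, `[i, k + π i]` and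
`[k + i, k + i]` (`i < k`), coloured by the family they belong to. In their intersection graph
the middle interval number `i` meets exactly `k - i` intervals of the first family and `π i + 1`
of the third, so a colour-preserving isomorphism between two such graphs forces the permutations
to be equal. Hence an isomorphism class of interval graphs on `3k` vertices contains the graphs
of at most `3 ^ (3k)` permutations, one for each colouring of its vertices.
-/

theorem Nat.card_le_card_mul_card_of_injective_fiber {α β γ : Type*} [Finite α] [Finite β]
    [Finite γ] (f : α → β) (hf : ∀ a₀, ∃ g : {a // f a = f a₀} → γ, g.Injective) :
    Nat.card α ≤ Nat.card γ * Nat.card β := by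
  classical
  have := Fintype.ofFinite α
  have := Fintype.ofFinite β
  have := Fintype.ofFinite γ
  simp only [Nat.card_eq_fintype_card]
  have hfiber (b) (hb : b ∈ Finset.univ.image f) :
      (Finset.univ.filter (f · = b)).card ≤ Fintype.card γ := by
    obtain ⟨a₀, -, rfl⟩ := Finset.mem_image.1 hb
    obtain ⟨g, hg⟩ := hf a₀
    rw [← Fintype.card_subtype]
    exact Fintype.card_le_of_injective g hg
  calc Fintype.card α
      ≤ Fintype.card γ * (Finset.univ.image f).card := Finset.card_le_mul_card_image _ _ hfiber
    _ ≤ Fintype.card γ * Fintype.card β := by gcongr; exact Finset.card_le_univ _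

namespace SimpleGraph

theorem card_adj_and_fst_eq {α β : Type*} (G : SimpleGraph (α × β)) (v : α × β) (x : α) :
    Nat.card {w // G.Adj v w ∧ w.1 = x} = Nat.card {y // G.Adj v (x, y)} :=
  Nat.card_congr
    { toFun w := ⟨w.1.2, by simpa [← w.2.2] using w.2.1⟩
      invFun y := ⟨(x, y), y.2, rfl⟩
      left_inv w := by obtain ⟨⟨_, _⟩, _, rfl⟩ := w; rfl
      right_inv _ := rfl }

theorem Iso.card_adj_color_eq {V W C : Type*} {G : SimpleGraph V} {H : SimpleGraph W}
    (e : G ≃g H) (cV : V → C) (cW : W → C) (he : ∀ v, cW (e v) = cV v) (v : V) (x : C) :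
    Nat.card {w // G.Adj v w ∧ cV w = x} = Nat.card {w // H.Adj (e v) w ∧ cW w = x} :=
  Nat.card_congr <| e.toEquiv.subtypeEquiv fun w => by simp [he, e.map_adj_iff]

theorem card_le_pow_mul_card_of_rigid_coloring {α β V C : Type*} [Finite α] [Finite β]
    [Finite V] [Finite C] (G : α → SimpleGraph V) (f : α → β)
    (hf : ∀ a a', f a = f a' → Nonempty (G a ≃g G a')) (c : V → C)
    (hc : ∀ a a' (e : G a ≃g G a'), (∀ v, c (e v) = c v) → a = a') :
    Nat.card α ≤ Nat.card C ^ Nat.card V * Nat.card β := by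
  rw [← Nat.card_fun]
  refine Nat.card_le_card_mul_card_of_injective_fiber f fun a₀ => ?_
  refine ⟨fun a => c ∘ (hf a a₀ a.2).some.symm, fun a a' h => Subtype.ext ?_⟩
  refine hc a a' ((hf a a₀ a.2).some.trans (hf a' a₀ a'.2).some.symm) fun v => ?_
  simpa using (congrFun h ((hf a a₀ a.2).some v)).symm

end SimpleGraph

def intervalGraph {V α : Type*} [LinearOrder α] (a b : V → α) : SimpleGraph V where
  Adj u v := u ≠ v ∧ a u ≤ b v ∧ a v ≤ b u
  symm := ⟨fun _ _ h => ⟨h.1.symm, h.2.2, h.2.1⟩⟩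
  loopless := ⟨fun _ h => h.1 rfl⟩

section intervalGraph

variable {V W α β : Type*} [LinearOrder α] [LinearOrder β] (a b : V → α)

theorem intervalGraph_adj {u v : V} :
    (intervalGraph a b).Adj u v ↔ u ≠ v ∧ a u ≤ b v ∧ a v ≤ b u := Iff.rfl

theorem intervalGraph_comap (e : W ↪ V) :
    (intervalGraph a b).comap e = intervalGraph (a ∘ e) (b ∘ e) := by
  ext u v
  simp [intervalGraph_adj, e.injective.ne_iff]

theorem intervalGraph_comp_strictMono {g : α → β} (hg : StrictMono g) :
    intervalGraph (g ∘ a) (g ∘ b) = intervalGraph a b := by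
  ext u v
  simp [intervalGraph_adj, hg.le_iff_le]

theorem isIntervalGraph_intervalGraph {n : ℕ} (a b : Fin n → ℝ) (hab : ∀ i, a i ≤ b i) :
    IsIntervalGraph (intervalGraph a b) := by
  refine ⟨a, b, hab, fun i j hij => ?_⟩
  rw [intervalGraph_adj, Set.Icc_inter_Icc, Set.nonempty_Icc]
  simp [hij, hab]
  tauto

theorem isIntervalGraph_comap_intervalGraph {n : ℕ} (a b : V → ℕ) (hab : ∀ v, a v ≤ b v)
    (e : Fin n ≃ V) : IsIntervalGraph ((intervalGraph a b).comap e) := by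
  rw [show (intervalGraph a b).comap e = (intervalGraph a b).comap e.toEmbedding from rfl,
    intervalGraph_comap, ← intervalGraph_comp_strictMono _ _ Nat.strictMono_cast (β := ℝ)]
  exact isIntervalGraph_intervalGraph _ _ fun i => by simpa using hab (e i)

end intervalGraph

section permIntervalGraph

variable {k : ℕ}

def permIntervalGraph (π : Equiv.Perm (Fin k)) : SimpleGraph (Fin 3 × Fin k) :=
  intervalGraph (fun v => ![(v.2 : ℕ), v.2, k + v.2] v.1)
    (fun v => ![(v.2 : ℕ), k + π v.2, k + v.2] v.1)

variable (π : Equiv.Perm (Fin k)) (i j : Fin k)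

theorem permIntervalGraph_adj_one_zero : (permIntervalGraph π).Adj (1, i) (0, j) ↔ i ≤ j := by
  simp [permIntervalGraph, intervalGraph_adj]
  omega

theorem permIntervalGraph_adj_one_two :
    (permIntervalGraph π).Adj (1, i) (2, j) ↔ j ≤ π i := by
  simp [permIntervalGraph, intervalGraph_adj]
  omega

theorem card_permIntervalGraph_adj_zero :
    Nat.card {w // (permIntervalGraph π).Adj (1, i) w ∧ w.1 = 0} = k - i := by
  simp [SimpleGraph.card_adj_and_fst_eq, permIntervalGraph_adj_one_zero, Fintype.card_subtype,
    Finset.filter_le_eq_Ici]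

theorem card_permIntervalGraph_adj_two :
    Nat.card {w // (permIntervalGraph π).Adj (1, i) w ∧ w.1 = 2} = π i + 1 := by
  simp [SimpleGraph.card_adj_and_fst_eq, permIntervalGraph_adj_one_two, Fintype.card_subtype,
    Finset.filter_ge_eq_Iic]

theorem eq_of_iso_permIntervalGraph {σ : Equiv.Perm (Fin k)}
    (e : permIntervalGraph π ≃g permIntervalGraph σ) (he : ∀ v, (e v).1 = v.1) : π = σ := by
  ext i
  have hi : e (1, i) = (1, (e (1, i)).2) := Prod.ext (he _) rfl
  have h0 := e.card_adj_color_eq Prod.fst Prod.fst he (1, i) 0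
  have h2 := e.card_adj_color_eq Prod.fst Prod.fst he (1, i) 2
  rw [hi, card_permIntervalGraph_adj_zero, card_permIntervalGraph_adj_zero] at h0
  rw [hi, card_permIntervalGraph_adj_two, card_permIntervalGraph_adj_two] at h2
  have hii : (e (1, i)).2 = i := by omega
  rw [hii] at h2
  omega

theorem isIntervalGraph_comap_permIntervalGraph (e : Fin (3 * k) ≃ Fin 3 × Fin k) :
    IsIntervalGraph ((permIntervalGraph π).comap e) :=
  isIntervalGraph_comap_intervalGraph _ _
    (fun ⟨c, _⟩ => by fin_cases c <;> simp [le_add_right, Fin.is_le']) e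

end permIntervalGraph

theorem interval_graph_count_lower_factorial_general (k : ℕ) :
    (Nat.factorial k : ℝ) / 3 ^ (3 * k) ≤ (intervalGraphCount (3 * k) : ℝ) := by
  let e : Fin (3 * k) ≃ Fin 3 × Fin k := finProdFinEquiv.symm
  let isoClass (π : Equiv.Perm (Fin k)) : Quotient (intervalIsoSetoid (3 * k)) :=
    ⟦⟨(permIntervalGraph π).comap e, isIntervalGraph_comap_permIntervalGraph π e⟩⟧
  have hiso (π σ) (h : isoClass π = isoClass σ) :
      Nonempty (permIntervalGraph π ≃g permIntervalGraph σ) :=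
    let ⟨f⟩ := Quotient.exact h
    ⟨(SimpleGraph.Iso.comap e _).symm.trans (f.trans (SimpleGraph.Iso.comap e _))⟩
  have hcount := SimpleGraph.card_le_pow_mul_card_of_rigid_coloring permIntervalGraph isoClass
    hiso Prod.fst eq_of_iso_permIntervalGraph
  rw [Nat.card_perm, Nat.card_prod, Nat.card_fin, Nat.card_fin, ← intervalGraphCount] at hcount
  rw [div_le_iff₀ (by positivity), mul_comm]
  exact_mod_cast hcount

theorem interval_graph_count_lower_factorial (k : ℕ) (hk : 0 < k) :
    (Nat.factorial k : ℝ) / 3 ^ (3 * k) ≤ (intervalGraphCount (3 * k) : ℝ) :=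
  interval_graph_count_lower_factorial_general k
end

section
/- Fix 0 < ε < 1/2 and a positive integer k, let B_j = [-j-ε,-j+ε], R_j = [j-ε,j+ε] for 1 ≤ j ≤ k, and let W be the set of k² intervals [-a,b] with a,b ∈ {1,…,k}. For n with 2k < n, the map sending a subset J ⊆ W of size n - 2k to the vertex-colored intersection graph of {B_1,…,B_k} ∪ {R_1,…,R_k} ∪ J (with blue, red, white colors respectively) is injective up to color-preserving isomorphism. -/
/-- Vertex type: blue vertices, red vertices, and white vertices indexed by a finite
set of pairs `(a, b)` encoding the interval `[-a, b]`. -/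
def ColoredVertex (k : ℕ) (J : Finset (ℕ × ℕ)) : Type :=
  Fin k ⊕ Fin k ⊕ {p : ℕ × ℕ // p ∈ J}

/-- The interval attached to each vertex (ε-neighborhoods of ±1,…,±k for blue/red,
and `[-a, b]` for white vertex `(a, b)`). -/
def vertIvl (ε : ℝ) (k : ℕ) (J : Finset (ℕ × ℕ)) : ColoredVertex k J → Set ℝ :=
  Sum.elim (fun j => Set.Icc (-((j : ℝ) + 1) - ε) (-((j : ℝ) + 1) + ε))
    (Sum.elim (fun j => Set.Icc (((j : ℝ) + 1) - ε) (((j : ℝ) + 1) + ε))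
      (fun p => Set.Icc (-(p.1.1 : ℝ)) (p.1.2 : ℝ)))

/-- The intersection graph of the intervals. -/
def intersectionGraph (ε : ℝ) (k : ℕ) (J : Finset (ℕ × ℕ)) :
    SimpleGraph (ColoredVertex k J) :=
  SimpleGraph.fromRel (fun u v => (vertIvl ε k J u ∩ vertIvl ε k J v).Nonempty)

/-- The coloring: blue = 0, red = 1, white = 2. -/
def vertColor (k : ℕ) (J : Finset (ℕ × ℕ)) : ColoredVertex k J → Fin 3 :=
  Sum.elim (fun _ => 0) (Sum.elim (fun _ => 1) (fun _ => 2))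

/-!
A colour-preserving isomorphism maps white vertices to white vertices. Since `ε < 1`, the white
interval `[-a, b]` (with `a, b ≤ k`) meets exactly the blue intervals `B_1, …, B_a` and the red
intervals `R_1, …, R_b`, so `a` and `b` are its numbers of blue and red neighbours. These counts are
invariant under colour-preserving isomorphisms, so the white vertex `(a, b)` of one graph is sent
to the white vertex `(a, b)` of the other; hence `J₁ ⊆ J₂`, and symmetrically `J₂ ⊆ J₁`.
-/

namespace SimpleGraph

variable {V W C : Type*}

noncomputable def colorDegree (G : SimpleGraph V) (col : V → C) (v : V) (c : C) : ℕ :=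
  {w | G.Adj v w ∧ col w = c}.ncard

theorem Iso.colorDegree_apply {G : SimpleGraph V} {H : SimpleGraph W} (e : G ≃g H)
    {colG : V → C} {colH : W → C} (he : ∀ v, colH (e v) = colG v) (v : V) (c : C) :
    H.colorDegree colH (e v) c = G.colorDegree colG v c := by
  have hpre : {w | G.Adj v w ∧ colG w = c} = e ⁻¹' {w | H.Adj (e v) w ∧ colH w = c} := by
    ext w
    simp [he, e.map_adj_iff]
  rw [colorDegree, colorDegree, hpre,
    Set.ncard_preimage_of_injective_subset_range e.injective (by simp [e.surjective.range_eq])]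

end SimpleGraph

theorem Set.Icc_sub_add_inter_Icc_nonempty_iff {α : Type*} [AddCommGroup α] [LinearOrder α]
    [IsOrderedAddMonoid α] {x ε a b : α} (hε : 0 ≤ ε) (hab : a ≤ b) :
    (Set.Icc (x - ε) (x + ε) ∩ Set.Icc a b).Nonempty ↔ a ≤ x + ε ∧ x - ε ≤ b := by
  have hx : x - ε ≤ x + ε := (sub_le_self x hε).trans (le_add_of_nonneg_right hε)
  rw [Set.Icc_inter_Icc, Set.nonempty_Icc, max_le_iff, le_min_iff, le_min_iff]
  tauto

theorem Nat.cast_le_cast_add_iff_of_lt_one {α : Type*} [CommRing α] [LinearOrder α]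
    [IsStrictOrderedRing α] {m n : ℕ} {ε : α} (h0 : 0 ≤ ε) (h1 : ε < 1) :
    (m : α) ≤ n + ε ↔ m ≤ n := by
  constructor
  · intro h
    by_contra! hlt
    have : (n : α) + 1 ≤ m := by exact_mod_cast hlt
    linarith
  · intro h
    have : (m : α) ≤ n := by exact_mod_cast h
    linarith

namespace ColoredVertex

-- `ColoredVertex` is a plain `def`, so `simp` and `rw` do not see through the `Sum` constructors;
-- these names and the eliminator below stand in for them.

variable {k : ℕ} {J : Finset (ℕ × ℕ)}

abbrev blue (j : Fin k) : ColoredVertex k J := Sum.inl j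

abbrev red (j : Fin k) : ColoredVertex k J := Sum.inr (Sum.inl j)

abbrev white (p : J) : ColoredVertex k J := Sum.inr (Sum.inr p)

@[elab_as_elim]
theorem induction {motive : ColoredVertex k J → Prop} (blue : ∀ j, motive (blue j))
    (red : ∀ j, motive (red j)) (white : ∀ p, motive (white p)) (v : ColoredVertex k J) :
    motive v :=
  match v with
  | Sum.inl j => blue j
  | Sum.inr (Sum.inl j) => red j
  | Sum.inr (Sum.inr p) => white p

theorem blue_injective : Function.Injective (blue : Fin k → ColoredVertex k J) :=
  Sum.inl_injective

theorem red_injective : Function.Injective (red : Fin k → ColoredVertex k J) :=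
  Sum.inr_injective.comp Sum.inl_injective

theorem blue_ne_white (j : Fin k) (p : J) : blue j ≠ white p := Sum.inl_ne_inr

theorem red_ne_white (j : Fin k) (p : J) : red j ≠ white p :=
  fun h => Sum.inl_ne_inr (Sum.inr_injective h)

end ColoredVertex

theorem Fin.ncard_setOf_val_lt (n m : ℕ) : {i : Fin n | (i : ℕ) < m}.ncard = min n m := by
  rw [Set.ncard_eq_toFinset_card', Set.toFinset_ofPred, Fin.card_filter_val_lt]

section IntersectionGraph

open ColoredVertex

variable {ε : ℝ} {k : ℕ} {J : Finset (ℕ × ℕ)}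

theorem intersectionGraph_adj_iff (u v : ColoredVertex k J) :
    (intersectionGraph ε k J).Adj u v ↔ u ≠ v ∧ (vertIvl ε k J u ∩ vertIvl ε k J v).Nonempty := by
  rw [intersectionGraph, SimpleGraph.fromRel_adj, Set.inter_comm (vertIvl ε k J v), or_self]

theorem intersectionGraph_adj_white_blue (hε0 : 0 ≤ ε) (hε1 : ε < 1) (p : J) (j : Fin k) :
    (intersectionGraph ε k J).Adj (white p) (blue j) ↔ (j : ℕ) < p.1.1 := by
  have hright : -((j : ℝ) + 1) - ε ≤ p.1.2 := by
    have : (0 : ℝ) ≤ p.1.2 := Nat.cast_nonneg _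
    linarith [(Nat.cast_nonneg j : (0 : ℝ) ≤ j)]
  have hleft : -(p.1.1 : ℝ) ≤ -((j : ℝ) + 1) + ε ↔ ((j + 1 : ℕ) : ℝ) ≤ p.1.1 + ε := by
    push_cast
    constructor <;> intro h <;> linarith
  rw [intersectionGraph_adj_iff, and_iff_right (blue_ne_white j p).symm, Set.inter_comm]
  simp only [vertIvl, Sum.elim_inl, Sum.elim_inr]
  rw [Set.Icc_sub_add_inter_Icc_nonempty_iff hε0
    ((neg_nonpos.2 (Nat.cast_nonneg _)).trans (Nat.cast_nonneg _)), and_iff_left hright, hleft,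
    Nat.cast_le_cast_add_iff_of_lt_one hε0 hε1, Nat.add_one_le_iff]

theorem intersectionGraph_adj_white_red (hε0 : 0 ≤ ε) (hε1 : ε < 1) (p : J) (j : Fin k) :
    (intersectionGraph ε k J).Adj (white p) (red j) ↔ (j : ℕ) < p.1.2 := by
  have hleft : -(p.1.1 : ℝ) ≤ (j : ℝ) + 1 + ε := by
    have : (0 : ℝ) ≤ p.1.1 := Nat.cast_nonneg _
    linarith [(Nat.cast_nonneg j : (0 : ℝ) ≤ j)]
  have hright : (j : ℝ) + 1 - ε ≤ p.1.2 ↔ ((j + 1 : ℕ) : ℝ) ≤ p.1.2 + ε := by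
    push_cast
    constructor <;> intro h <;> linarith
  rw [intersectionGraph_adj_iff, and_iff_right (red_ne_white j p).symm, Set.inter_comm]
  simp only [vertIvl, Sum.elim_inl, Sum.elim_inr]
  rw [Set.Icc_sub_add_inter_Icc_nonempty_iff hε0
    ((neg_nonpos.2 (Nat.cast_nonneg _)).trans (Nat.cast_nonneg _)), and_iff_right hleft, hright,
    Nat.cast_le_cast_add_iff_of_lt_one hε0 hε1, Nat.add_one_le_iff]

theorem colorDegree_white_blue (hε0 : 0 ≤ ε) (hε1 : ε < 1) (p : J) (hp : p.1.1 ≤ k) :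
    (intersectionGraph ε k J).colorDegree (vertColor k J) (white p) 0 = p.1.1 := by
  have hnbrs : {w | (intersectionGraph ε k J).Adj (white p) w ∧ vertColor k J w = 0} =
      blue '' {j : Fin k | (j : ℕ) < p.1.1} := by
    ext w
    induction w using ColoredVertex.induction with
    | blue j => simp [vertColor, intersectionGraph_adj_white_blue hε0 hε1, blue_injective.eq_iff]
    | red j => simp [vertColor]
    | white q => simp [vertColor]
  rw [SimpleGraph.colorDegree, hnbrs, Set.ncard_image_of_injective _ blue_injective,
    Fin.ncard_setOf_val_lt, min_eq_right hp]

theorem colorDegree_white_red (hε0 : 0 ≤ ε) (hε1 : ε < 1) (p : J) (hp : p.1.2 ≤ k) :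
    (intersectionGraph ε k J).colorDegree (vertColor k J) (white p) 1 = p.1.2 := by
  have hnbrs : {w | (intersectionGraph ε k J).Adj (white p) w ∧ vertColor k J w = 1} =
      red '' {j : Fin k | (j : ℕ) < p.1.2} := by
    ext w
    induction w using ColoredVertex.induction with
    | blue j => simp [vertColor]
    | red j => simp [vertColor, intersectionGraph_adj_white_red hε0 hε1, red_injective.eq_iff]
    | white q => simp [vertColor, red_ne_white]
  rw [SimpleGraph.colorDegree, hnbrs, Set.ncard_image_of_injective _ red_injective,
    Fin.ncard_setOf_val_lt, min_eq_right hp]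

theorem vertColor_eq_two_iff (v : ColoredVertex k J) : vertColor k J v = 2 ↔ ∃ p, v = white p := by
  induction v using ColoredVertex.induction <;> simp [vertColor, red_ne_white]

theorem subset_of_colorPreservingIso (hε0 : 0 ≤ ε) (hε1 : ε < 1) {J₁ J₂ : Finset (ℕ × ℕ)}
    (hJ₁ : ∀ p ∈ J₁, p.1 ≤ k ∧ p.2 ≤ k) (hJ₂ : ∀ p ∈ J₂, p.1 ≤ k ∧ p.2 ≤ k)
    (e : intersectionGraph ε k J₁ ≃g intersectionGraph ε k J₂)
    (he : ∀ v, vertColor k J₂ (e v) = vertColor k J₁ v) : J₁ ⊆ J₂ := by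
  intro p hp
  obtain ⟨q, hq⟩ := (vertColor_eq_two_iff _).1 (he (white ⟨p, hp⟩))
  have hfst : q.1.1 = p.1 := by
    rw [← colorDegree_white_blue hε0 hε1 q (hJ₂ q.1 q.2).1, ← hq, e.colorDegree_apply he,
      colorDegree_white_blue hε0 hε1 _ (hJ₁ p hp).1]
  have hsnd : q.1.2 = p.2 := by
    rw [← colorDegree_white_red hε0 hε1 q (hJ₂ q.1 q.2).2, ← hq, e.colorDegree_apply he,
      colorDegree_white_red hε0 hε1 _ (hJ₁ p hp).2]
  rw [← Prod.ext hfst hsnd]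
  exact q.2

end IntersectionGraph

theorem colored_intersection_graph_injective_general (ε : ℝ) (hε0 : 0 < ε) (hε : ε < 1/2)
    (k : ℕ)
    (J₁ J₂ : Finset (ℕ × ℕ))
    (hJ₁ : J₁ ⊆ Finset.Icc 1 k ×ˢ Finset.Icc 1 k) (hJ₂ : J₂ ⊆ Finset.Icc 1 k ×ˢ Finset.Icc 1 k)
    (hiso : ∃ e : intersectionGraph ε k J₁ ≃g intersectionGraph ε k J₂,
      ∀ v, vertColor k J₂ (e v) = vertColor k J₁ v) :
    J₁ = J₂ := by
  obtain ⟨e, he⟩ := hiso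
  have hε1 : ε < 1 := by linarith
  have hbound : ∀ J : Finset (ℕ × ℕ), J ⊆ Finset.Icc 1 k ×ˢ Finset.Icc 1 k →
      ∀ p ∈ J, p.1 ≤ k ∧ p.2 ≤ k := by
    intro J hJ p hp
    obtain ⟨h1, h2⟩ := Finset.mem_product.1 (hJ hp)
    exact ⟨(Finset.mem_Icc.1 h1).2, (Finset.mem_Icc.1 h2).2⟩
  have he' : ∀ w, vertColor k J₁ (e.symm w) = vertColor k J₂ w := by
    intro w
    rw [← he, e.apply_symm_apply]
  exact (subset_of_colorPreservingIso hε0.le hε1 (hbound _ hJ₁) (hbound _ hJ₂) e he).antisymm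
    (subset_of_colorPreservingIso hε0.le hε1 (hbound _ hJ₂) (hbound _ hJ₁) e.symm he')

theorem colored_intersection_graph_injective (ε : ℝ) (hε0 : 0 < ε) (hε : ε < 1/2)
    (k n : ℕ) (hk : 0 < k) (hn : 2 * k < n)
    (J₁ J₂ : Finset (ℕ × ℕ))
    (hJ₁ : J₁ ⊆ Finset.Icc 1 k ×ˢ Finset.Icc 1 k) (hJ₂ : J₂ ⊆ Finset.Icc 1 k ×ˢ Finset.Icc 1 k)
    (hc₁ : J₁.card = n - 2 * k) (hc₂ : J₂.card = n - 2 * k)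
    (hiso : ∃ e : intersectionGraph ε k J₁ ≃g intersectionGraph ε k J₂,
      ∀ v, vertColor k J₂ (e v) = vertColor k J₁ v) :
    J₁ = J₂ :=
  colored_intersection_graph_injective_general ε hε0 hε k J₁ J₂ hJ₁ hJ₂ hiso
end

section
/- For every n and every k with 2k < n, I_n · 3^n ≥ C(k², n-2k), where I_n is the number of unlabeled interval graphs on n vertices and C(k², n-2k) is the binomial coefficient. -/
/-!
With r = n - 2k, encode an r-element subset S of the grid `Fin k × Fin k` as a 3-coloured
interval graph: rows [0, i] of colour 0, columns [k + j, 2k] of colour 1, and for each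
(a, b) ∈ S a point interval [a, k + b] of colour 2. That interval meets row i iff a ≤ i and
column j iff j ≤ b, so it has k - a neighbours of colour 0 and b + 1 of colour 1; hence S can be
read off the coloured graph up to isomorphism. The C(k², r) coloured graphs are therefore
pairwise non-isomorphic, while each unlabeled graph on n vertices has at most 3ⁿ colourings.
-/

open Finset

namespace IntervalGraphCount

variable {V : Type*}

def intervalGraph (lo hi : V → ℝ) : SimpleGraph V where
  Adj x y := x ≠ y ∧ (Set.Icc (lo x) (hi x) ∩ Set.Icc (lo y) (hi y)).Nonempty
  symm := ⟨fun _ _ h => ⟨h.1.symm, Set.inter_comm _ _ ▸ h.2⟩⟩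
  loopless := ⟨fun _ h => h.1 rfl⟩

theorem isIntervalGraph_comap_intervalGraph {n : ℕ} {lo hi : V → ℝ} (h : ∀ v, lo v ≤ hi v)
    {f : Fin n → V} (hf : Function.Injective f) : IsIntervalGraph ((intervalGraph lo hi).comap f) :=
  ⟨lo ∘ f, hi ∘ f, fun i => h (f i), fun i j hij => by simp [intervalGraph, hf.ne_iff, hij]⟩

theorem intervalGraph_adj_iff {lo hi : V → ℝ} {x y : V} (hx : lo x ≤ hi x) (hy : lo y ≤ hi y) :
    (intervalGraph lo hi).Adj x y ↔ x ≠ y ∧ lo x ≤ hi y ∧ lo y ≤ hi x := by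
  simp only [intervalGraph, Set.Icc_inter_Icc, Set.nonempty_Icc, sup_le_iff, le_inf_iff]
  exact and_congr_right fun _ => ⟨fun h => ⟨h.2.1, h.1.2⟩, fun h => ⟨⟨hx, h.2⟩, h.1, hy⟩⟩

theorem card_le_intervalGraphCount_mul_pow {T W α : Type*} [Finite α] {n : ℕ} (e : W ≃ Fin n)
    (G : T → SimpleGraph W) (hG : ∀ t, IsIntervalGraph ((G t).comap e.symm)) (χ : T → W → α)
    (hχ : ∀ t t' (φ : G t ≃g G t'), χ t' ∘ φ = χ t → t = t') :
    Nat.card T ≤ intervalGraphCount n * Nat.card α ^ n := by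
  let cls (t : T) : Quotient (intervalIsoSetoid n) := ⟦⟨(G t).comap e.symm, hG t⟩⟧
  let toG (t : T) : (cls t).out.1 ≃g G t :=
    (Quotient.mk_out (s := intervalIsoSetoid n) _).some.trans (SimpleGraph.Iso.comap e.symm (G t))
  -- general in `q q'`, so that `q = q'` can be substituted despite the dependent types
  have eq_of_out_eq : ∀ {t t'} {q q' : Quotient (intervalIsoSetoid n)}, q = q' →
      ∀ (φ : q.out.1 ≃g G t) (φ' : q'.out.1 ≃g G t'), χ t ∘ φ = χ t' ∘ φ' → t = t' := by
    rintro t t' q _ rfl φ φ' h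
    refine hχ t t' (φ.symm.trans φ') (funext fun v => ?_)
    simpa using (congrFun h (φ.symm v)).symm
  calc Nat.card T
      ≤ Nat.card (Quotient (intervalIsoSetoid n) × (Fin n → α)) :=
        Nat.card_le_card_of_injective (fun t => (cls t, χ t ∘ toG t)) fun t t' h =>
          eq_of_out_eq (Prod.ext_iff.1 h).1 _ _ (Prod.ext_iff.1 h).2
    _ = intervalGraphCount n * Nat.card α ^ n := by
      rw [Nat.card_prod, Nat.card_fun, Nat.card_fin, intervalGraphCount]

section ColorDegree

variable {W α : Type*}

noncomputable def colorDegree (G : SimpleGraph V) (χ : V → α) (c : α) (v : V) : ℕ :=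
  Nat.card {w // G.Adj v w ∧ χ w = c}

theorem colorDegree_iso {G : SimpleGraph V} {G' : SimpleGraph W} (φ : G ≃g G') {χ : V → α}
    {χ' : W → α} (h : χ' ∘ φ = χ) (c : α) (v : V) :
    colorDegree G' χ' c (φ v) = colorDegree G χ c v :=
  Nat.card_congr <| (φ.toEquiv.subtypeEquiv fun w => by simp [← h, φ.map_adj_iff]).symm

end ColorDegree

section Grid

variable {k r : ℕ}

abbrev GridVertex (k r : ℕ) := Fin k ⊕ Fin k ⊕ Fin r

def gridColor : GridVertex k r → Fin 3
  | .inl _ => 0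
  | .inr (.inl _) => 1
  | .inr (.inr _) => 2

def gridLo (f : Fin r → Fin k × Fin k) : GridVertex k r → ℕ
  | .inl _ => 0
  | .inr (.inl j) => k + j
  | .inr (.inr t) => (f t).1

def gridHi (f : Fin r → Fin k × Fin k) : GridVertex k r → ℕ
  | .inl i => i
  | .inr (.inl _) => 2 * k
  | .inr (.inr t) => k + (f t).2

noncomputable def gridGraph (f : Fin r → Fin k × Fin k) : SimpleGraph (GridVertex k r) :=
  intervalGraph (fun v => gridLo f v) (fun v => gridHi f v)

theorem gridLo_le_gridHi (f : Fin r → Fin k × Fin k) (v : GridVertex k r) :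
    gridLo f v ≤ gridHi f v := by
  rcases v with i | j | t <;> simp only [gridLo, gridHi] <;> omega

theorem gridGraph_adj_iff (f : Fin r → Fin k × Fin k) {x y : GridVertex k r} :
    (gridGraph f).Adj x y ↔ x ≠ y ∧ gridLo f x ≤ gridHi f y ∧ gridLo f y ≤ gridHi f x := by
  rw [gridGraph, intervalGraph_adj_iff (mod_cast gridLo_le_gridHi f x)
    (mod_cast gridLo_le_gridHi f y)]
  norm_cast

theorem colorDegree_gridGraph_zero (f : Fin r → Fin k × Fin k) (t : Fin r) :
    colorDegree (gridGraph f) gridColor 0 (.inr (.inr t)) = k - (f t).1 := by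
  classical
  rw [colorDegree, Nat.card_eq_fintype_card, Fintype.card_subtype, card_filter,
    Fintype.sum_sum_type, Fintype.sum_sum_type]
  simp [gridGraph_adj_iff, gridColor, gridLo, gridHi, filter_le_eq_Ici]

theorem colorDegree_gridGraph_one (f : Fin r → Fin k × Fin k) (t : Fin r) :
    colorDegree (gridGraph f) gridColor 1 (.inr (.inr t)) = (f t).2 + 1 := by
  classical
  have : ((f t).1 : ℕ) ≤ 2 * k := by omega
  rw [colorDegree, Nat.card_eq_fintype_card, Fintype.card_subtype, card_filter,
    Fintype.sum_sum_type, Fintype.sum_sum_type]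
  simp [gridGraph_adj_iff, gridColor, gridLo, gridHi, this, filter_ge_eq_Iic]

theorem range_subset_of_gridGraph_iso {f f' : Fin r → Fin k × Fin k}
    (φ : gridGraph f ≃g gridGraph f') (hφ : gridColor ∘ φ = gridColor) :
    Set.range f ⊆ Set.range f' := by
  rintro _ ⟨t, rfl⟩
  have hcolor : gridColor (φ (.inr (.inr t))) = 2 := congrFun hφ _
  obtain ⟨t', ht'⟩ : ∃ t', φ (.inr (.inr t)) = .inr (.inr t') := by
    rcases hv : φ (.inr (.inr t)) with i | j | t' <;> simp [hv, gridColor] at hcolor ⊢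
  have h0 := colorDegree_iso φ hφ 0 (.inr (.inr t))
  have h1 := colorDegree_iso φ hφ 1 (.inr (.inr t))
  rw [ht', colorDegree_gridGraph_zero, colorDegree_gridGraph_zero] at h0
  rw [ht', colorDegree_gridGraph_one, colorDegree_gridGraph_one] at h1
  have := (f t).1.isLt
  have := (f' t').1.isLt
  exact ⟨t', Prod.ext (Fin.ext (by omega)) (Fin.ext (by omega))⟩

end Grid

end IntervalGraphCount

open IntervalGraphCount

theorem interval_graph_count_times_three_pow (n k : ℕ) (h : 2 * k < n) :
    (k ^ 2).choose (n - 2 * k) ≤ intervalGraphCount n * 3 ^ n := by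
  set r := n - 2 * k
  let e : GridVertex k r ≃ Fin n := Fintype.equivFinOfCardEq <| by
    simp only [Fintype.card_sum, Fintype.card_fin]; omega
  let enum (S : {S : Finset (Fin k × Fin k) // #S = r}) : Fin r → Fin k × Fin k :=
    Subtype.val ∘ (S.1.equivFinOfCardEq S.2).symm
  have range_enum S : Set.range (enum S) = S.1 := by
    simp [enum, EquivLike.range_comp]
  calc (k ^ 2).choose r = Nat.card {S : Finset (Fin k × Fin k) // #S = r} := by
        simp [Fintype.card_finset_len, sq]
    _ ≤ intervalGraphCount n * Nat.card (Fin 3) ^ n :=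
        card_le_intervalGraphCount_mul_pow e (fun S => gridGraph (enum S))
          (fun S => isIntervalGraph_comap_intervalGraph (mod_cast gridLo_le_gridHi (enum S))
            e.symm.injective)
          (fun _ => gridColor) fun S S' φ hφ => Subtype.ext <|
            eq_of_subset_of_card_le (coe_subset.1 <| by
              simpa only [range_enum] using range_subset_of_gridGraph_iso φ hφ) (by rw [S.2, S'.2])
    _ = intervalGraphCount n * 3 ^ n := by simp
end
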